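/- Let J ⊆ I be saturated homogeneous ideals of R = K[x,y,z] defining closed subschemes of P^2, where I is the radical ideal of t = d(d+1)/2 distinct reduced points. If J has a minimal free resolution of the form 0 → R^d(-d-1) → R^{d+1}(-d) → J → 0, then J = I. -/

import Mathlib

open MvPolynomial

section SymbolicPower
variable {R : Type*} [CommRing R]

/-- The multiplicative set `U = R \ ⋃ P ∈ Ass(R/I), P`. -/
def assComplement (I : Ideal R) : Submonoid R where
  carrier := {x | ∀ P ∈ associatedPrimes R (R ⧸ I), x ∉ P}
  one_mem' := fun P hP => (Ideal.ne_top_iff_one P).mp hP.1.ne_top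
  mul_mem' := by
    intro a b ha hb P hP hab
    rcases hP.1.mem_or_mem hab with h | h
    · exact ha P hP h
    · exact hb P hP h

/-- The `m`-th symbolic power `I^(m) = R ∩ I^m R_U`. -/
def symbolicPower (I : Ideal R) (m : ℕ) : Ideal R :=
  Ideal.comap (algebraMap R (Localization (assComplement I)))
    (Ideal.map (algebraMap R (Localization (assComplement I))) (I ^ m))

/-- The resurgence `ρ(I) = sup { m/r : I^(m) ⊄ I^r }`. -/
noncomputable def resurgence (I : Ideal R) : ℝ :=
  sSup {x : ℝ | ∃ m r : ℕ, 0 < m ∧ 0 < r ∧ ¬ symbolicPower I m ≤ I ^ r ∧ x = (m : ℝ) / r}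

end SymbolicPower

section Poly
variable {K : Type*} [Field K] {n : ℕ}

attribute [local instance] MvPolynomial.gradedAlgebra

/-- The initial degree `α(I)`: the least degree of a nonzero element of `I`. -/
noncomputable def initDeg (I : Ideal (MvPolynomial (Fin n) K)) : ℕ :=
  sInf {t | ∃ f ∈ I, f ≠ 0 ∧ MvPolynomial.totalDegree f = t}

/-- The Waldschmidt constant `α̂(I) = inf_{m ≥ 1} α(I^(m))/m`. -/
noncomputable def waldschmidt (I : Ideal (MvPolynomial (Fin n) K)) : ℝ :=
  ⨅ m : ℕ+, (initDeg (symbolicPower I m) : ℝ) / (m : ℝ)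

/-- The vanishing (saturated radical) ideal of the projective point with homogeneous
coordinates `p`: all polynomials vanishing on the line spanned by `p`. -/
noncomputable def pointIdeal (p : Fin n → K) : Ideal (MvPolynomial (Fin n) K) :=
  ⨅ t : K, RingHom.ker (MvPolynomial.eval (t • p) : MvPolynomial (Fin n) K →+* K)

/-- An ideal is homogeneous w.r.t. the standard grading. -/
def IsHomogeneousIdeal (I : Ideal (MvPolynomial (Fin n) K)) : Prop :=
  Ideal.IsHomogeneous (homogeneousSubmodule (Fin n) K) I

/-- Two coordinate vectors represent the same projective point. -/
def ProjEq (u v : Fin n → K) : Prop := ∃ c : K, c ≠ 0 ∧ u = c • v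

/-- A homogeneous ideal is saturated (w.r.t. the irrelevant maximal ideal). -/
def IsSaturatedIdeal (J : Ideal (MvPolynomial (Fin n) K)) : Prop :=
  ∀ f, (∀ i, MvPolynomial.X i * f ∈ J) → f ∈ J

/-- The Hilbert function `t ↦ dim_K (R/J)_t` of a homogeneous ideal `J`. -/
noncomputable def hilbFun (J : Ideal (MvPolynomial (Fin n) K)) (t : ℕ) : ℕ :=
  Module.finrank K ((homogeneousSubmodule (Fin n) K t).map
    (Ideal.Quotient.mkₐ K J).toLinearMap)

/-- `I` is minimally generated by `k` forms of degree `δ`. -/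
def MinimallyGeneratedBy (I : Ideal (MvPolynomial (Fin n) K)) (k δ : ℕ) : Prop :=
  ∃ g : Fin k → MvPolynomial (Fin n) K,
    (∀ i, (g i).IsHomogeneous δ ∧ g i ≠ 0) ∧
    Ideal.span (Set.range g) = I ∧
    ∀ i, g i ∉ Ideal.span (g '' {j | j ≠ i})

/-- `IsMinFreeRes I e0 e1 e2 g A B` : the data of a graded minimal free resolution
`0 → ⊕_k R(-e2 k) -B→ ⊕_j R(-e1 j) -A→ ⊕_i R(-e0 i) → I → 0` of `I`. -/
def IsMinFreeRes (I : Ideal (MvPolynomial (Fin n) K)) {n0 n1 n2 : ℕ}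
    (e0 : Fin n0 → ℕ) (e1 : Fin n1 → ℕ) (e2 : Fin n2 → ℕ)
    (g : Fin n0 → MvPolynomial (Fin n) K)
    (A : Matrix (Fin n0) (Fin n1) (MvPolynomial (Fin n) K))
    (B : Matrix (Fin n1) (Fin n2) (MvPolynomial (Fin n) K)) : Prop :=
  (∀ i, (g i).IsHomogeneous (e0 i) ∧ g i ≠ 0) ∧
  Ideal.span (Set.range g) = I ∧
  (∀ i j, (A i j).IsHomogeneous (e1 j - e0 i) ∧ (e1 j ≤ e0 i → A i j = 0)) ∧
  (∀ j k, (B j k).IsHomogeneous (e2 k - e1 j) ∧ (e2 k ≤ e1 j → B j k = 0)) ∧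
  Function.Injective (Matrix.toLin' B) ∧
  LinearMap.range (Matrix.toLin' B) = LinearMap.ker (Matrix.toLin' A) ∧
  LinearMap.range (Matrix.toLin' A) =
    LinearMap.ker (Fintype.linearCombination (MvPolynomial (Fin n) K) g)

/-- The Castelnuovo–Mumford regularity of `I` is `r`: the minimal graded free
resolution of `I` satisfies `max_j (f_j - j) = r`. -/
def HasReg (I : Ideal (MvPolynomial (Fin n) K)) (r : ℕ) : Prop :=
  ∃ (n0 n1 n2 : ℕ) (e0 : Fin n0 → ℕ) (e1 : Fin n1 → ℕ) (e2 : Fin n2 → ℕ)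
    (g : Fin n0 → MvPolynomial (Fin n) K)
    (A : Matrix (Fin n0) (Fin n1) (MvPolynomial (Fin n) K))
    (B : Matrix (Fin n1) (Fin n2) (MvPolynomial (Fin n) K)),
    IsMinFreeRes I e0 e1 e2 g A B ∧
    r = max (Finset.univ.sup e0)
        (max (Finset.univ.sup fun j => e1 j - 1) (Finset.univ.sup fun k => e2 k - 2))

/-- `I` has the (minimal, linear) free resolution
`0 → R^d(-d-1) → R^{d+1}(-d) → I → 0`. -/
def HasLinearPointsRes (I : Ideal (MvPolynomial (Fin n) K)) (d : ℕ) : Prop :=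
  ∃ (g : Fin (d+1) → MvPolynomial (Fin n) K)
    (A : Matrix (Fin (d+1)) (Fin d) (MvPolynomial (Fin n) K)),
    (∀ i, (g i).IsHomogeneous d ∧ g i ≠ 0) ∧
    Ideal.span (Set.range g) = I ∧
    (∀ i j, (A i j).IsHomogeneous 1) ∧
    Function.Injective (Matrix.toLin' A) ∧
    LinearMap.range (Matrix.toLin' A) =
      LinearMap.ker (Fintype.linearCombination (MvPolynomial (Fin n) K) g)

/-- `I` has a minimal free resolution that is linear, with generators in degree `δ`. -/
def HasLinearResolution (I : Ideal (MvPolynomial (Fin n) K)) (δ : ℕ) : Prop :=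
  ∃ (n0 n1 n2 : ℕ) (g : Fin n0 → MvPolynomial (Fin n) K)
    (A : Matrix (Fin n0) (Fin n1) (MvPolynomial (Fin n) K))
    (B : Matrix (Fin n1) (Fin n2) (MvPolynomial (Fin n) K)),
    IsMinFreeRes I (fun _ => δ) (fun _ => δ + 1) (fun _ => δ + 2) g A B

end Poly

section QSC
variable (K : Type*) [Field K]

/-- A quasi star configuration `Z_d = T_d + S_2(2,d)` in `P^2`:
`d` general lines `L i` (pairwise distinct, no three concurrent), the star
configuration of their pairwise intersection points `p i j`, together with
`d` further distinct points `q i ∈ L i`, disjoint from the star points and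
not all collinear. -/
structure QuasiStarConfig (d : ℕ) where
  L : Fin d → MvPolynomial (Fin 3) K
  L_hom : ∀ i, (L i).IsHomogeneous 1
  L_ne : ∀ i, L i ≠ 0
  lines_distinct : ∀ i j, i ≠ j → ¬ ∃ c : K, L i = c • L j
  no_three_concurrent : ∀ i j k : Fin d, i ≠ j → i ≠ k → j ≠ k →
    ∀ v : Fin 3 → K, v ≠ 0 →
      ¬ (eval v (L i) = 0 ∧ eval v (L j) = 0 ∧ eval v (L k) = 0)
  p : Fin d → Fin d → (Fin 3 → K)
  p_ne : ∀ i j, i ≠ j → p i j ≠ 0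
  p_mem : ∀ i j, i ≠ j → eval (p i j) (L i) = 0 ∧ eval (p i j) (L j) = 0
  q : Fin d → (Fin 3 → K)
  q_ne : ∀ i, q i ≠ 0
  q_mem : ∀ i, eval (q i) (L i) = 0
  q_distinct : ∀ i j, i ≠ j → ¬ ProjEq (q i) (q j)
  q_not_star : ∀ i j k, j ≠ k → ¬ ProjEq (q i) (p j k)
  q_not_collinear : ¬ ∃ M : MvPolynomial (Fin 3) K,
    M.IsHomogeneous 1 ∧ M ≠ 0 ∧ ∀ i, eval (q i) M = 0

end QSC

/-- The defining (radical, saturated) ideal of a quasi star configuration. -/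
noncomputable def QuasiStarConfig.ideal {K : Type*} [Field K] {d : ℕ}
    (Z : QuasiStarConfig K d) :
    Ideal (MvPolynomial (Fin 3) K) :=
  (⨅ (i : Fin d) (j : Fin d) (_ : i ≠ j), pointIdeal (Z.p i j)) ⊓
    ⨅ i : Fin d, pointIdeal (Z.q i)

/-!
A resolution `0 → R(-d-1)^d → R(-d)^(d+1) → J → 0` bounds the Hilbert function of `J` from
below: in degree `t > d`, `dim J_t ≥ (d+1) dim R_{t-d} - d dim R_{t-d-1} = dim R_t - d(d+1)/2`.
Distinct points impose independent conditions on forms of degree at least their number minus one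
(products of separating linear forms interpolate), so `dim I_t = dim R_t - d(d+1)/2` in large
degree, and `J ⊆ I` forces `J_t = I_t` there. A saturated ideal is determined by its components of
large degree, and `I` is homogeneous, hence `J = I`.
-/

open MvPolynomial Finset Module

attribute [local instance] MvPolynomial.gradedAlgebra

namespace MvPolynomial

section CommSemiring

variable {σ R : Type*} [CommSemiring R]

theorem IsHomogeneous.eval_smul {f : MvPolynomial σ R} {t : ℕ} (hf : f.IsHomogeneous t)
    (c : R) (x : σ → R) : eval (c • x) f = c ^ t * eval x f := by
  simp only [eval_eq, Finset.mul_sum]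
  refine Finset.sum_congr rfl fun m hm => ?_
  simp only [Pi.smul_apply, smul_eq_mul, mul_pow, Finset.prod_mul_distrib,
    Finset.prod_pow_eq_pow_sum, ← hf.degree_eq_sum_deg_support hm]
  ring

theorem homogeneousComponent_add_mul {h : MvPolynomial σ R} {b : ℕ} (hh : h.IsHomogeneous b)
    (w : MvPolynomial σ R) (s : ℕ) :
    homogeneousComponent (b + s) (h * w) = h * homogeneousComponent s w := by
  rw [← decomposition.decompose'_apply, ← decomposition.decompose'_apply]
  exact DirectSum.coe_decompose_mul_add_of_left_mem (homogeneousSubmodule σ R) hh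

instance [Finite σ] (t : ℕ) : Module.Finite R (homogeneousSubmodule σ R t) :=
  Module.Finite.iff_fg.mpr (homogeneousSubmodule_fg σ R t)

end CommSemiring

theorem finrank_homogeneousSubmodule {σ K : Type*} [Fintype σ] [Field K] (t : ℕ) :
    finrank K (homogeneousSubmodule σ K t) = (Fintype.card σ + t - 1).choose t := by
  classical
  have hsupp : {d : σ →₀ ℕ | d.degree = t} =
      ((univ : Finset σ).finsuppAntidiag t : Set (σ →₀ ℕ)) := by
    ext d
    simp [mem_finsuppAntidiag, Finsupp.degree_eq_sum]
  rw [homogeneousSubmodule_eq_finsupp_supported]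
  refine (finrank_eq_nat_card_basis
    (basisRestrictSupport K {d : σ →₀ ℕ | d.degree = t})).trans ?_
  rw [hsupp, Nat.card_coe_set_eq, Set.ncard_coe_finset, card_finsuppAntidiag_nat_eq_choose,
    card_univ]

theorem eval_homogeneousComponent_eq_zero {σ R : Type*} [CommRing R] [IsDomain R] [Infinite R]
    {f : MvPolynomial σ R} {x : σ → R} (h : ∀ c : R, eval (c • x) f = 0) (j : ℕ) :
    eval x (homogeneousComponent j f) = 0 := by
  -- `c ↦ eval (c • x) f` is the polynomial in `c` with coefficients `eval x` of the homogeneous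
  -- components of `f`, and it vanishes on the infinite domain `R`.
  set q : Polynomial R := ∑ i ∈ range (f.totalDegree + 1),
    Polynomial.monomial i (eval x (homogeneousComponent i f))
  have hq : q = 0 := Polynomial.funext fun c => by
    have hc := h c
    rw [← sum_homogeneousComponent f, map_sum] at hc
    simpa [q, Polynomial.eval_finsetSum, (homogeneousComponent_isHomogeneous _ f).eval_smul,
      mul_comm] using hc
  have hqj := congrArg (Polynomial.coeff · j) hq
  simp only [q, Polynomial.finsetSum_coeff, Polynomial.coeff_monomial, sum_ite_eq',
    mem_range, Polynomial.coeff_zero] at hqj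
  split_ifs at hqj with hj
  · exact hqj
  · rw [homogeneousComponent_eq_zero j f (by omega), map_zero]

end MvPolynomial

namespace Ideal

variable {σ R : Type*} [CommSemiring R]

noncomputable def homogeneousPart (J : Ideal (MvPolynomial σ R)) (t : ℕ) :
    Submodule R (homogeneousSubmodule σ R t) :=
  (J.restrictScalars R).comap (homogeneousSubmodule σ R t).subtype

@[simp]
theorem mem_homogeneousPart {J : Ideal (MvPolynomial σ R)} {t : ℕ}
    {f : homogeneousSubmodule σ R t} :
    f ∈ J.homogeneousPart t ↔ (f : MvPolynomial σ R) ∈ J :=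
  Iff.rfl

theorem homogeneousPart_mono {I J : Ideal (MvPolynomial σ R)} (h : J ≤ I) (t : ℕ) :
    J.homogeneousPart t ≤ I.homogeneousPart t :=
  fun _ hf => h hf

end Ideal

section PointIdeal

variable {K : Type*} [Field K] {n : ℕ}

theorem mem_pointIdeal_iff {f : MvPolynomial (Fin n) K} {t : ℕ} (hf : f.IsHomogeneous t)
    {p : Fin n → K} : f ∈ pointIdeal p ↔ eval p f = 0 := by
  simp only [pointIdeal, Ideal.mem_iInf, RingHom.mem_ker, hf.eval_smul]
  exact ⟨fun h => by simpa using h 1, fun h c => by rw [h, mul_zero]⟩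

theorem isHomogeneousIdeal_pointIdeal [Infinite K] (p : Fin n → K) :
    IsHomogeneousIdeal (pointIdeal p) := by
  intro j f hf
  have key : homogeneousComponent j f ∈ pointIdeal p := by
    rw [mem_pointIdeal_iff (homogeneousComponent_isHomogeneous j f)]
    exact eval_homogeneousComponent_eq_zero (fun c => RingHom.mem_ker.mp (Ideal.mem_iInf.mp hf c)) j
  exact (decomposition.decompose'_apply f j).symm ▸ key

theorem exists_isHomogeneous_one_eval_eq_zero_eval_ne_zero {u v : Fin n → K} (hu : u ≠ 0)
    (hv : v ≠ 0) (h : ¬ ProjEq u v) :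
    ∃ L : MvPolynomial (Fin n) K, L.IsHomogeneous 1 ∧ eval v L = 0 ∧ eval u L ≠ 0 := by
  obtain ⟨k, hk⟩ : ∃ k, v k ≠ 0 := Function.ne_iff.mp hv
  obtain ⟨l, hl⟩ : ∃ l, v k * u l ≠ v l * u k := by
    by_contra! hc
    refine h ⟨u k / v k, fun h0 => hu (funext fun l => ?_), funext fun l => ?_⟩
    · rw [div_eq_zero_iff, or_iff_left hk] at h0
      simpa [h0, hk] using hc l
    · simp only [Pi.smul_apply, smul_eq_mul]
      field_simp
      linear_combination hc l
  refine ⟨C (v k) * X l - C (v l) * X k,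
    (isHomogeneous_C_mul_X _ _).sub (isHomogeneous_C_mul_X _ _), by simp [mul_comm], ?_⟩
  simpa [sub_eq_zero] using hl

variable {ι : Type*} [Fintype ι] {p : ι → Fin n → K}

theorem exists_isHomogeneous_eval_ne_zero_eval_eq_zero (hp : ∀ i, p i ≠ 0)
    (hdist : Pairwise fun i j => ¬ ProjEq (p i) (p j)) {t : ℕ} (ht : Fintype.card ι ≤ t + 1)
    (i : ι) : ∃ f : MvPolynomial (Fin n) K, f.IsHomogeneous t ∧ eval (p i) f ≠ 0 ∧
      ∀ j, j ≠ i → eval (p j) f = 0 := by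
  classical
  obtain ⟨k, hk⟩ : ∃ k, p i k ≠ 0 := Function.ne_iff.mp (hp i)
  have hL : ∀ j, ∃ L : MvPolynomial (Fin n) K,
      L.IsHomogeneous 1 ∧ eval (p i) L ≠ 0 ∧ (j ≠ i → eval (p j) L = 0) := by
    intro j
    by_cases hj : j = i
    · exact ⟨X k, isHomogeneous_X K k, by simpa using hk, fun h => absurd hj h⟩
    · obtain ⟨L, hL1, hLj, hLi⟩ := exists_isHomogeneous_one_eval_eq_zero_eval_ne_zero
        (hp i) (hp j) (hdist (Ne.symm hj))
      exact ⟨L, hL1, hLi, fun _ => hLj⟩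
  choose L hL1 hLi hLj using hL
  have hcard : Fintype.card ι - 1 + (t + 1 - Fintype.card ι) = t := by
    have := Fintype.card_pos_iff.mpr ⟨i⟩
    omega
  refine ⟨(∏ j ∈ univ.erase i, L j) * X k ^ (t + 1 - Fintype.card ι), ?_, ?_, ?_⟩
  · have := (IsHomogeneous.prod (univ.erase i) L (fun _ => 1) fun j _ => hL1 j).mul
      (isHomogeneous_X_pow (R := K) k (t + 1 - Fintype.card ι))
    simpa [hcard] using this
  · simp [prod_ne_zero_iff, hLi, hk]
  · intro j hj
    rw [map_mul, map_prod]
    exact mul_eq_zero_of_left (prod_eq_zero (mem_erase.mpr ⟨hj, mem_univ j⟩) (hLj j hj)) _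

theorem finrank_homogeneousPart_iInf_pointIdeal (hp : ∀ i, p i ≠ 0)
    (hdist : Pairwise fun i j => ¬ ProjEq (p i) (p j)) {t : ℕ} (ht : Fintype.card ι ≤ t + 1) :
    finrank K ((⨅ i, pointIdeal (p i)).homogeneousPart t) + Fintype.card ι =
      finrank K (homogeneousSubmodule (Fin n) K t) := by
  classical
  let φ : homogeneousSubmodule (Fin n) K t →ₗ[K] ι → K :=
    LinearMap.pi (fun i => (aeval (p i)).toLinearMap) ∘ₗ (homogeneousSubmodule _ K t).subtype
  have hker : (⨅ i, pointIdeal (p i)).homogeneousPart t = LinearMap.ker φ := by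
    ext f
    simp [φ, mem_pointIdeal_iff f.2, funext_iff]
  have hsurj : Function.Surjective φ := by
    intro w
    choose f hf hfi hfj using exists_isHomogeneous_eval_ne_zero_eval_eq_zero hp hdist ht
    refine ⟨⟨∑ i, C (w i / eval (p i) (f i)) * f i,
      sum_mem fun i _ => ((hf i).C_mul _ : _)⟩, funext fun j => ?_⟩
    simp only [φ, LinearMap.coe_comp, Submodule.coe_subtype, Function.comp_apply,
      LinearMap.pi_apply, map_sum, AlgHom.toLinearMap_apply, aeval_eq_eval, map_mul, eval_C]
    rw [sum_eq_single j (fun i _ hi => by rw [hfj i j hi.symm, mul_zero]) (by simp),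
      div_mul_cancel₀ _ (hfi j)]
  rw [hker, ← LinearMap.finrank_range_add_finrank_ker φ, LinearMap.range_eq_top.mpr hsurj,
    finrank_top, Module.finrank_fintype_fun_eq_card, add_comm]

end PointIdeal

theorem card_mul_finrank_homogeneousSubmodule_le {σ K : Type*} [Finite σ] [Field K]
    {J : Ideal (MvPolynomial σ K)} {ι κ : Type*} [Fintype ι] [Fintype κ]
    {g : ι → MvPolynomial σ K} {A : Matrix ι κ (MvPolynomial σ K)} {a b : ℕ}
    (hg : ∀ i, (g i).IsHomogeneous a) (hgJ : ∀ i, g i ∈ J)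
    (hA : ∀ i j, (A i j).IsHomogeneous b)
    (hker : LinearMap.ker (Fintype.linearCombination (MvPolynomial σ K) g) ≤
      LinearMap.range A.mulVecLin) (s : ℕ) :
    Fintype.card ι * finrank K (homogeneousSubmodule σ K (b + s)) ≤
      finrank K (J.homogeneousPart (b + s + a)) +
        Fintype.card κ * finrank K (homogeneousSubmodule σ K s) := by
  let Φ : (ι → homogeneousSubmodule σ K (b + s)) →ₗ[K] J.homogeneousPart (b + s + a) :=
    { toFun := fun v => ⟨⟨∑ i, (v i : MvPolynomial σ K) * g i,
        sum_mem fun i _ => (v i).2.mul (hg i)⟩, J.sum_mem fun i _ => J.mul_mem_left _ (hgJ i)⟩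
      map_add' := fun v w => by ext; simp [add_mul, sum_add_distrib]
      map_smul' := fun c v => by ext; simp [smul_sum] }
  let Ψ : (κ → homogeneousSubmodule σ K s) →ₗ[K]
      ι → homogeneousSubmodule σ K (b + s) :=
    { toFun := fun w i => ⟨∑ j, A i j * w j, sum_mem fun j _ => (hA i j).mul (w j).2⟩
      map_add' := fun v w => by ext; simp [mul_add, sum_add_distrib]
      map_smul' := fun c v => by ext; simp [smul_sum] }
  have hΦΨ : LinearMap.ker Φ ≤ LinearMap.range Ψ := by
    intro v hv
    obtain ⟨w, hw⟩ := hker (x := fun i => (v i : MvPolynomial σ K)) <| by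
      simpa [Φ, Fintype.linearCombination_apply, Subtype.ext_iff] using hv
    refine ⟨fun j => ⟨homogeneousComponent s (w j), homogeneousComponent_mem s (w j)⟩,
      funext fun i => Subtype.ext ?_⟩
    have hwi : ∑ j, A i j * w j = v i := by
      simpa [Matrix.mulVec, dotProduct] using congrFun hw i
    calc ∑ j, A i j * homogeneousComponent s (w j)
        = homogeneousComponent (b + s) (∑ j, A i j * w j) := by
          simp [map_sum, homogeneousComponent_add_mul (hA i _)]
      _ = v i := by rw [hwi, homogeneousComponent_of_mem (v i).2, if_pos rfl]
  have hrank := LinearMap.finrank_range_add_finrank_ker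
    (V := ι → homogeneousSubmodule σ K (b + s)) (V₂ := J.homogeneousPart (b + s + a)) Φ
  calc Fintype.card ι * finrank K (homogeneousSubmodule σ K (b + s))
      = finrank K (LinearMap.range Φ) + finrank K (LinearMap.ker Φ) := by
        convert hrank.symm using 1
        simp [Module.finrank_pi_fintype]
    _ ≤ finrank K (J.homogeneousPart (b + s + a)) +
          finrank K (κ → homogeneousSubmodule σ K s) :=
        add_le_add (Submodule.finrank_le _)
          ((Submodule.finrank_mono hΦΨ).trans (LinearMap.finrank_range_le Ψ))
    _ = _ := by simp [Module.finrank_pi_fintype]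

theorem finrank_homogeneousSubmodule_fin_three {K : Type*} [Field K] (t : ℕ) :
    finrank K (homogeneousSubmodule (Fin 3) K t) = (t + 2).choose 2 := by
  rw [finrank_homogeneousSubmodule, Fintype.card_fin, show 3 + t - 1 = t + 2 by omega,
    Nat.choose_symm_add]

theorem HasLinearPointsRes.choose_le_finrank_homogeneousPart {K : Type*} [Field K]
    {J : Ideal (MvPolynomial (Fin 3) K)} {d t : ℕ} (hres : HasLinearPointsRes J d) (ht : d < t) :
    (t + 2).choose 2 ≤ finrank K (J.homogeneousPart t) + (d + 1).choose 2 := by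
  obtain ⟨g, A, hg, hspan, hA, -, hAker⟩ := hres
  obtain ⟨s, rfl⟩ : ∃ s, t = 1 + s + d := ⟨t - d - 1, by omega⟩
  have h := card_mul_finrank_homogeneousSubmodule_le (fun i => (hg i).1)
    (fun i => hspan ▸ Ideal.subset_span (Set.mem_range_self i)) hA hAker.symm.le s
  simp only [Fintype.card_fin, finrank_homogeneousSubmodule_fin_three] at h
  -- i.e. the resolution gives `R/J` the Hilbert polynomial `(d + 1).choose 2`
  have hchoose : (d + 1) * (1 + s + 2).choose 2 + (d + 1).choose 2 =
      (1 + s + d + 2).choose 2 + d * (s + 2).choose 2 := by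
    apply Nat.cast_injective (R := ℚ)
    push_cast [Nat.cast_choose_two]
    ring
  omega

theorem IsSaturatedIdeal.mem_of_forall_prod_X_mul_mem {K : Type*} [Field K] {n : ℕ}
    {J : Ideal (MvPolynomial (Fin n) K)} (hJ : IsSaturatedIdeal J) {N : ℕ}
    {f : MvPolynomial (Fin n) K} (h : ∀ v : Fin N → Fin n, (∏ i, X (v i)) * f ∈ J) :
    f ∈ J := by
  induction N generalizing f with
  | zero => simpa using h Fin.elim0
  | succ N ih =>
    exact ih fun v => hJ _ fun i => by simpa [Fin.prod_univ_succ, mul_assoc] using h (Fin.cons i v)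

theorem IsSaturatedIdeal.eq_of_le_of_homogeneousPart_le {K : Type*} [Field K] {n : ℕ}
    {I J : Ideal (MvPolynomial (Fin n) K)} (hJ : IsSaturatedIdeal J) (hI : IsHomogeneousIdeal I)
    (hJI : J ≤ I) {N : ℕ} (h : ∀ t, N ≤ t → I.homogeneousPart t ≤ J.homogeneousPart t) :
    J = I := by
  refine le_antisymm hJI fun f hf => ?_
  rw [← sum_homogeneousComponent f]
  refine J.sum_mem fun c _ => hJ.mem_of_forall_prod_X_mul_mem (N := N) fun v => ?_
  have hv : (∏ i, X (v i) : MvPolynomial (Fin n) K).IsHomogeneous N := by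
    simpa using IsHomogeneous.prod univ (fun i => X (v i)) (fun _ => 1)
      fun i _ => isHomogeneous_X K (v i)
  exact h (N + c) (Nat.le_add_right N c)
    (x := ⟨_, hv.mul (homogeneousComponent_isHomogeneous c f)⟩)
    (I.mul_mem_left _ (homogeneousComponent_mem_of_mem hI hf c))

theorem eq_of_linear_points_res_general {K : Type*} [Field K] [IsAlgClosed K]
    (d : ℕ)
    (p : Fin (d * (d + 1) / 2) → (Fin 3 → K)) (hp : ∀ i, p i ≠ 0)
    (hdist : ∀ i j, i ≠ j → ¬ ProjEq (p i) (p j))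
    (I J : Ideal (MvPolynomial (Fin 3) K)) (hI : I = ⨅ i, pointIdeal (p i))
    (hJsat : IsSaturatedIdeal J)
    (hJI : J ≤ I) (hres : HasLinearPointsRes J d) : J = I := by
  subst hI
  have hcard : d * (d + 1) / 2 = (d + 1).choose 2 := by
    rw [Nat.choose_two_right, Nat.add_sub_cancel, mul_comm]
  refine hJsat.eq_of_le_of_homogeneousPart_le
    (Ideal.IsHomogeneous.iInf fun i => isHomogeneousIdeal_pointIdeal (p i)) hJI
    (N := d * (d + 1) / 2 + d + 1) fun t ht => ?_
  have hpoints : Fintype.card (Fin (d * (d + 1) / 2)) ≤ t + 1 := by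
    rw [Fintype.card_fin]
    omega
  have hI := finrank_homogeneousPart_iInf_pointIdeal hp (fun i j => hdist i j) hpoints
  have hJ := hres.choose_le_finrank_homogeneousPart (t := t) (by omega)
  rw [finrank_homogeneousSubmodule_fin_three, Fintype.card_fin] at hI
  exact (Submodule.eq_of_le_of_finrank_le (Ideal.homogeneousPart_mono hJI t) (by omega)).ge

/-- a saturated homogeneous ideal `J ⊆ I` with minimal free resolution
`0 → R^d(-d-1) → R^{d+1}(-d) → J → 0`, where `I` is the radical ideal of `d(d+1)/2`
distinct points of `P^2`, equals `I`. -/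
theorem eq_of_linear_points_res {K : Type*} [Field K] [IsAlgClosed K]
    (d : ℕ) (hd : 0 < d)
    (p : Fin (d * (d + 1) / 2) → (Fin 3 → K)) (hp : ∀ i, p i ≠ 0)
    (hdist : ∀ i j, i ≠ j → ¬ ProjEq (p i) (p j))
    (I J : Ideal (MvPolynomial (Fin 3) K)) (hI : I = ⨅ i, pointIdeal (p i))
    (hJhom : IsHomogeneousIdeal J) (hJsat : IsSaturatedIdeal J)
    (hJI : J ≤ I) (hres : HasLinearPointsRes J d) : J = I :=
  eq_of_linear_points_res_general d p hp hdist I J hI hJsat hJI hres
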